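/- arXiv:2402.04037 — 6 statements merged into one kernel-verified Lean document; each statement's English description precedes it below -/
import Mathlib

section
/- Let n = 2k−1 with k ≥ 1, and let σ ∈ S_{n+1} with t = σ^{-1}(n+1). Define T_σ : Z_2^n → Z_2^n by (T_σ v)_i = v_{σ^{-1}(i)} + v_t (with v_{n+1} = 0). If wt(v) = k then wt(T_σ v) = k. -/
/-!
Extending `v` by a zero coordinate, `T_σ v` becomes the first `n` coordinates of
`w = ext(v) ∘ σ⁻¹ + c` with `c = ext(v)_t`, whose coordinate `n + 1` is `c + c = 0`. So
`wt(T_σ v) = wt(w)`. If `c = 0` this is `wt(v) = k`; if `c = 1`, `w` is the complement of a vector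
of weight `k` in `Z_2^{2k}`, so again `wt(w) = 2k - k = k`.
-/

open Finset

def extV (n : ℕ) (v : Fin n → ZMod 2) : Fin (n + 1) → ZMod 2 :=
  fun j => if h : (j : ℕ) < n then v ⟨j, h⟩ else 0

def Tmap (n : ℕ) (σ : Equiv.Perm (Fin (n + 1))) (v : Fin n → ZMod 2) : Fin n → ZMod 2 :=
  fun i => extV n v (σ⁻¹ (Fin.castSucc i)) + extV n v (σ⁻¹ (Fin.last n))

theorem hammingNorm_comp_equiv {ι κ β : Type*} [Fintype ι] [Fintype κ] [Zero β] [DecidableEq β]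
    (x : κ → β) (e : ι ≃ κ) : hammingNorm (x ∘ e) = hammingNorm x :=
  card_equiv e (by simp)

theorem hammingNorm_add_one_add_hammingNorm {ι : Type*} [Fintype ι] (x : ι → ZMod 2) :
    hammingNorm (x + 1) + hammingNorm x = Fintype.card ι := by
  have h : ∀ a : ZMod 2, a + 1 ≠ 0 ↔ ¬a ≠ 0 := by decide
  simp only [hammingNorm, Pi.add_apply, Pi.one_apply, h]
  rw [add_comm, card_filter_add_card_filter_not, card_univ]

theorem hammingNorm_eq_hammingNorm_init {n : ℕ} {β : Type*} [Zero β] [DecidableEq β]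
    (x : Fin (n + 1) → β) (hx : x (Fin.last n) = 0) : hammingNorm x = hammingNorm (Fin.init x) := by
  rw [hammingNorm, hammingNorm, card_filter, card_filter, Fin.sum_univ_castSucc, hx]
  simp only [ne_eq, not_true_eq_false, if_false, add_zero]
  rfl

theorem hammingNorm_extV (n : ℕ) (v : Fin n → ZMod 2) : hammingNorm (extV n v) = hammingNorm v := by
  rw [hammingNorm_eq_hammingNorm_init _ (by simp [extV])]
  congr 1
  funext i
  simp [Fin.init, extV]

theorem hammingNorm_Tmap (n : ℕ) (σ : Equiv.Perm (Fin (n + 1))) (v : Fin n → ZMod 2) :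
    hammingNorm (Tmap n σ v) =
      hammingNorm (extV n v ∘ ⇑σ⁻¹ + Function.const _ (extV n v (σ⁻¹ (Fin.last n)))) := by
  rw [hammingNorm_eq_hammingNorm_init (extV n v ∘ ⇑σ⁻¹ + Function.const _ _)
    (CharTwo.add_self_eq_zero _)]
  rfl

/-- For `n = 2k - 1` with `k ≥ 1`: if `wt(v) = k` then `wt(T_σ v) = k`. -/
theorem stmt_2 (n k : ℕ) (hk : 1 ≤ k) (hn : n = 2 * k - 1) (σ : Equiv.Perm (Fin (n + 1)))
    (v : Fin n → ZMod 2) (hv : hammingNorm v = k) :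
    hammingNorm (Tmap n σ v) = k := by
  have hwt : hammingNorm (extV n v ∘ ⇑σ⁻¹) = k := by
    rw [← hv, ← hammingNorm_extV n v]
    exact hammingNorm_comp_equiv (extV n v) σ⁻¹
  rw [hammingNorm_Tmap]
  obtain h | h : extV n v (σ⁻¹ (Fin.last n)) = 0 ∨ extV n v (σ⁻¹ (Fin.last n)) = 1 := by
    generalize extV n v (σ⁻¹ (Fin.last n)) = c
    revert c
    decide
  · rw [h, Function.const_zero, add_zero, hwt]
  · have hcompl := hammingNorm_add_one_add_hammingNorm (extV n v ∘ ⇑σ⁻¹)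
    rw [Fintype.card_fin] at hcompl
    rw [h, Function.const_one]
    omega
end

section
/- Let n = 2k−1 with k ≥ 2 and σ ∈ S_{n+1} with t = σ^{-1}(n+1). Define f_σ on subsets of [n] by f_σ(X) = σ(X) if t ∉ X, and f_σ(X) = ([n] \ σ(X \ {t})) if t ∈ X (where σ(X) means the image {σ(x) : x ∈ X}, which lies in [n] in both cases). Then f_σ is an automorphism of the graph H(2k−1, k). -/
open Finset symmDiff

/-- The graph `H(n,k)` on subsets of `[n]`: `X ~ Y` iff `|X ∆ Y| = k`. -/
def HGraph (n k : ℕ) : SimpleGraph (Finset (Fin n)) where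
  Adj X Y := (X ∆ Y).card = k ∧ X ≠ Y
  symm := by
    constructor
    intro X Y h
    exact ⟨by rw [symmDiff_comm]; exact h.1, h.2.symm⟩
  loopless := ⟨fun X h => h.2 rfl⟩

/-- For `σ ∈ S_{n+1}` with `t = σ⁻¹(n+1)`: `f_σ(X) = σ(X)` if `t ∉ X`, and
`f_σ(X) = [n] \ σ(X \ {t})` if `t ∈ X`.  (Subsets of `[n]` are `Finset (Fin n)`; the
set `[n+1]` is modelled by `Fin (n+1)` with `n+1` corresponding to `Fin.last n`, and
`t ∈ X` is equivalent to `Fin.last n ∈ σ(X)`.) -/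
def fperm (n : ℕ) (σ : Equiv.Perm (Fin (n + 1))) (X : Finset (Fin n)) : Finset (Fin n) :=
  let Y := X.image (fun i => σ (Fin.castSucc i))
  if Fin.last n ∈ Y then Finset.univ.filter (fun i => Fin.castSucc i ∉ Y)
  else Finset.univ.filter (fun i => Fin.castSucc i ∈ Y)

/-! Send `X ⊆ [n]` to its image `σ(X) ⊆ [n+1] = [2k]`; this preserves `|X ∆ Y|`, and `σ(X)`
never contains `σ(n+1)`. Then `f_σ(X)` is `σ(X)` or its complement, whichever avoids `n+1`.
Complementing one of two subsets of a `2k`-element set turns `|S ∆ T|` into `2k - |S ∆ T|`,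
which equals `k` exactly when `|S ∆ T|` does; and two sets avoiding a common point `σ(n+1)` are
never complementary, so the choice of representative is injective. -/

section ComplIfMem

variable {α : Type*} [DecidableEq α] [Fintype α]

lemma compl_symmDiff_eq_compl_symmDiff (s t : Finset α) : sᶜ ∆ t = (s ∆ t)ᶜ := by
  ext x
  simp only [mem_symmDiff, mem_compl]
  tauto

lemma card_compl_symmDiff_eq_iff {k : ℕ} (hα : Fintype.card α = 2 * k) (s t : Finset α) :
    #(sᶜ ∆ t) = k ↔ #(s ∆ t) = k := by
  rw [compl_symmDiff_eq_compl_symmDiff, card_compl, hα]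
  have := (card_le_univ (s ∆ t)).trans_eq hα
  omega

/-- The representative of `{S, Sᶜ}` that avoids `a`. -/
def complIfMem (a : α) (S : Finset α) : Finset α := if a ∈ S then Sᶜ else S

lemma card_symmDiff_complIfMem_eq_iff {k : ℕ} (hα : Fintype.card α = 2 * k) (a : α)
    (S T : Finset α) : #(complIfMem a S ∆ complIfMem a T) = k ↔ #(S ∆ T) = k := by
  unfold complIfMem
  split_ifs
  · rw [compl_symmDiff_compl]
  · exact card_compl_symmDiff_eq_iff hα S T
  · rw [symmDiff_comm, card_compl_symmDiff_eq_iff hα, symmDiff_comm]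
  · rfl

lemma complIfMem_injOn (a b : α) : Set.InjOn (complIfMem a) {S | b ∉ S} := by
  intro S hS T hT h
  unfold complIfMem at h
  split_ifs at h
  · exact compl_injective h
  · exact absurd (h ▸ mem_compl.2 hS) hT
  · exact absurd (h ▸ mem_compl.2 hT) hS
  · exact h

end ComplIfMem

lemma card_image_symmDiff_image {α β : Type*} [DecidableEq α] [DecidableEq β] {f : α → β}
    (hf : Function.Injective f) (s t : Finset α) : #(s.image f ∆ t.image f) = #(s ∆ t) := by
  rw [← image_symmDiff _ _ hf, card_image_of_injective _ hf]

section FPerm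

variable {n : ℕ} (σ : Equiv.Perm (Fin (n + 1)))

lemma perm_castSucc_injective : Function.Injective (fun i : Fin n => σ (Fin.castSucc i)) :=
  σ.injective.comp (Fin.castSucc_injective n)

def permImage (X : Finset (Fin n)) : Finset (Fin (n + 1)) :=
  X.image (fun i => σ (Fin.castSucc i))

lemma permImage_injective : Function.Injective (permImage σ) :=
  image_injective (perm_castSucc_injective σ)

lemma perm_last_notMem_permImage (X : Finset (Fin n)) : σ (Fin.last n) ∉ permImage σ X := by
  simp only [permImage, mem_image, EmbeddingLike.apply_eq_iff_eq, not_exists, not_and]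
  exact fun i _ => (Fin.castSucc_lt_last i).ne

lemma image_castSucc_fperm (X : Finset (Fin n)) :
    (fperm n σ X).image Fin.castSucc = complIfMem (Fin.last n) (permImage σ X) := by
  change (if Fin.last n ∈ permImage σ X then univ.filter (fun i => Fin.castSucc i ∉ permImage σ X)
    else univ.filter (fun i => Fin.castSucc i ∈ permImage σ X)).image Fin.castSucc = _
  unfold complIfMem
  split_ifs with h <;> ext j <;> induction j using Fin.lastCases <;>
    simp [h, Fin.castSucc_ne_last]

lemma fperm_injective : Function.Injective (fperm n σ) := fun X Y h =>
  permImage_injective σ <|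
    complIfMem_injOn (Fin.last n) (σ (Fin.last n)) (perm_last_notMem_permImage σ X)
      (perm_last_notMem_permImage σ Y) <| by
        rw [← image_castSucc_fperm, ← image_castSucc_fperm, h]

lemma card_symmDiff_fperm_eq_iff {k : ℕ} (hn : n + 1 = 2 * k) (X Y : Finset (Fin n)) :
    #(fperm n σ X ∆ fperm n σ Y) = k ↔ #(X ∆ Y) = k := by
  rw [← card_image_symmDiff_image (Fin.castSucc_injective n), image_castSucc_fperm,
    image_castSucc_fperm, card_symmDiff_complIfMem_eq_iff (by rw [Fintype.card_fin, hn]),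
    permImage, permImage, card_image_symmDiff_image (perm_castSucc_injective σ)]

end FPerm

/-- For `n = 2k - 1`, `k ≥ 2`, the map `f_σ` is an automorphism of `H(2k-1, k)`. -/
theorem stmt_3 (k n : ℕ) (hk : 2 ≤ k) (hn : n = 2 * k - 1) (σ : Equiv.Perm (Fin (n + 1))) :
    Function.Bijective (fperm n σ) ∧
    (∀ X Y : Finset (Fin n),
      (HGraph n k).Adj X Y ↔ (HGraph n k).Adj (fperm n σ X) (fperm n σ Y)) := by
  have hinj := fperm_injective σ
  refine ⟨Finite.injective_iff_bijective.mp hinj, fun X Y => ?_⟩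
  have hcard := card_symmDiff_fperm_eq_iff σ (by omega : n + 1 = 2 * k) X Y
  simp only [HGraph, hcard, hinj.ne_iff]
end

section
/- Let n = 2k−1 with k ≥ 2. The finite sequence u_m = C(2m, m) · C(2k−2m−1, k−m), for 1 ≤ m ≤ k−1, satisfies u_m = u_{k−m} for all m, is strictly decreasing for 1 ≤ m < (k−1)/2, and is strictly increasing for (k−1)/2 < m ≤ k−1. Consequently, for 1 ≤ p, q ≤ k−1, u_p = u_q implies q = p or q = k−p. -/
/-- `u_m = C(2m, m) · C(2k - 2m - 1, k - m)`. -/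
def useq (k m : ℕ) : ℕ := Nat.choose (2 * m) m * Nat.choose (2 * k - 2 * m - 1) (k - m)

lemma central (i : ℕ) : Nat.choose (2*i+2) (i+1) = 2 * Nat.choose (2*i+1) (i+1) := by
  have h1 : Nat.choose (2*i+2) (i+1) = Nat.choose (2*i+1) i + Nat.choose (2*i+1) (i+1) :=
    Nat.choose_succ_succ (2*i+1) i
  have h2 : Nat.choose (2*i+1) i = Nat.choose (2*i+1) (i+1) := by
    have := Nat.choose_symm (show i+1 ≤ 2*i+1 by omega)
    rw [show 2*i+1-(i+1) = i from by omega] at this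
    exact this
  rw [h1, h2]; ring

lemma stepA (m : ℕ) : (m+1) * Nat.choose (2*m+2) (m+1) = 2 * ((2*m+1) * Nat.choose (2*m) m) := by
  have h3 := Nat.add_one_mul_choose_eq (2*m) m
  rw [central m]
  calc (m+1) * (2 * Nat.choose (2*m+1) (m+1))
      = 2 * (Nat.choose (2*m+1) (m+1) * (m+1)) := by ring
    _ = 2 * (Nat.succ (2*m) * Nat.choose (2*m) m) := by rw [← h3]
    _ = 2 * ((2*m+1) * Nat.choose (2*m) m) := by rw [Nat.succ_eq_add_one]

lemma stepB (i : ℕ) : (i+2) * Nat.choose (2*i+3) (i+2) = 2 * ((2*i+3) * Nat.choose (2*i+1) (i+1)) := by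
  have h3 := Nat.add_one_mul_choose_eq (2*i+2) (i+1)
  calc (i+2) * Nat.choose (2*i+3) (i+2)
      = Nat.choose (2*i+3) (i+2) * (i+2) := by ring
    _ = Nat.succ (2*i+2) * Nat.choose (2*i+2) (i+1) := by rw [← h3]
    _ = (2*i+3) * (2 * Nat.choose (2*i+1) (i+1)) := by rw [Nat.succ_eq_add_one, central i]
    _ = 2 * ((2*i+3) * Nat.choose (2*i+1) (i+1)) := by ring

lemma key (m i : ℕ) :
    (m+1) * (2*i+3) * useq (m+i+2) (m+1) = (2*m+1) * (i+2) * useq (m+i+2) m := by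
  unfold useq
  rw [show m+i+2 - (m+1) = i+1 from by omega,
      show 2*(m+i+2) - 2*(m+1) - 1 = 2*i+1 from by omega,
      show m+i+2 - m = i+2 from by omega,
      show 2*(m+i+2) - 2*m - 1 = 2*i+3 from by omega,
      show 2*(m+1) = 2*m+2 from by omega]
  have hA := stepA m
  have hB := stepB i
  calc (m+1) * (2*i+3) * (Nat.choose (2*m+2) (m+1) * Nat.choose (2*i+1) (i+1))
      = ((m+1) * Nat.choose (2*m+2) (m+1)) * ((2*i+3) * Nat.choose (2*i+1) (i+1)) := by ring
    _ = (2 * ((2*m+1) * Nat.choose (2*m) m)) * ((2*i+3) * Nat.choose (2*i+1) (i+1)) := by rw [hA]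
    _ = ((2*m+1) * Nat.choose (2*m) m) * (2 * ((2*i+3) * Nat.choose (2*i+1) (i+1))) := by ring
    _ = ((2*m+1) * Nat.choose (2*m) m) * ((i+2) * Nat.choose (2*i+3) (i+2)) := by rw [hB]
    _ = (2*m+1) * (i+2) * (Nat.choose (2*m) m * Nat.choose (2*i+3) (i+2)) := by ring

lemma upos (k m : ℕ) (h1 : m ≤ k - 1) (hk : 2 ≤ k) : 0 < useq k m := by
  unfold useq
  exact Nat.mul_pos (Nat.choose_pos (by omega)) (Nat.choose_pos (by omega))

lemma dec_step (k m : ℕ) (h : 2*m+1 < k) : useq k (m+1) < useq k m := by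
  obtain ⟨i, rfl⟩ : ∃ i, k = m+i+2 := ⟨k-m-2, by omega⟩
  have hkey := key m i
  have hpos : 0 < useq (m+i+2) m := upos _ _ (by omega) (by omega)
  have hcoef : (2*m+1) * (i+2) < (m+1) * (2*i+3) := by nlinarith [show m ≤ i from by omega]
  have h1 : (m+1) * (2*i+3) * useq (m+i+2) (m+1) < (m+1) * (2*i+3) * useq (m+i+2) m := by
    rw [hkey]; exact Nat.mul_lt_mul_of_lt_of_le hcoef (le_refl _) hpos
  exact lt_of_mul_lt_mul_left h1 (Nat.zero_le _)

lemma inc_step (k m : ℕ) (h1 : k - 1 < 2*m) (h2 : m+1 ≤ k-1) : useq k m < useq k (m+1) := by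
  obtain ⟨i, rfl⟩ : ∃ i, k = m+i+2 := ⟨k-m-2, by omega⟩
  have hkey := key m i
  have hpos : 0 < useq (m+i+2) (m+1) := upos _ _ (by omega) (by omega)
  have hcoef : (m+1) * (2*i+3) < (2*m+1) * (i+2) := by nlinarith [show i+2 ≤ m from by omega]
  have h3 : (2*m+1) * (i+2) * useq (m+i+2) m < (2*m+1) * (i+2) * useq (m+i+2) (m+1) := by
    rw [← hkey]; exact Nat.mul_lt_mul_of_lt_of_le hcoef (le_refl _) hpos
  exact lt_of_mul_lt_mul_left h3 (Nat.zero_le _)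

lemma usym (k m : ℕ) (h1 : 1 ≤ m) (h2 : m ≤ k - 1) (hk : 2 ≤ k) :
    useq k m = useq k (k - m) := by
  obtain ⟨a, b, rfl, rfl⟩ : ∃ a b, m = a+1 ∧ k = a+b+2 := ⟨m-1, k-m-1, by omega, by omega⟩
  unfold useq
  rw [show a+b+2 - (a+1) = b+1 from by omega,
      show 2*(a+b+2) - 2*(a+1) - 1 = 2*b+1 from by omega,
      show a+b+2 - (b+1) = a+1 from by omega,
      show 2*(a+b+2) - 2*(b+1) - 1 = 2*a+1 from by omega,
      show 2*(a+1) = 2*a+2 from by omega,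
      show 2*(b+1) = 2*b+2 from by omega,
      central a, central b]
  ring

lemma chain (k a b : ℕ) (hab : a < b) (hb : 2*b ≤ k) : useq k b < useq k a := by
  induction b with
  | zero => omega
  | succ b ih =>
    have hstep : useq k (b+1) < useq k b := dec_step k b (by omega)
    rcases Nat.lt_or_ge a b with h | h
    · exact hstep.trans (ih h (by omega))
    · have : a = b := by omega
      subst this; exact hstep

/-- For `n = 2k - 1`, `k ≥ 2`, the sequence `u_m` (for `1 ≤ m ≤ k-1`) satisfies
`u_m = u_{k-m}`, is strictly decreasing for `1 ≤ m < (k-1)/2`, strictly increasing for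
`(k-1)/2 < m ≤ k-1`, and consequently `u_p = u_q` implies `q = p` or `q = k - p`. -/
theorem stmt_5 (k : ℕ) (hk : 2 ≤ k) :
    (∀ m, 1 ≤ m → m ≤ k - 1 → useq k m = useq k (k - m)) ∧
    (∀ m, 1 ≤ m → 2 * m + 1 < k → useq k (m + 1) < useq k m) ∧
    (∀ m, k - 1 < 2 * m → m + 1 ≤ k - 1 → useq k m < useq k (m + 1)) ∧
    (∀ p q, 1 ≤ p → p ≤ k - 1 → 1 ≤ q → q ≤ k - 1 →
      useq k p = useq k q → q = p ∨ q = k - p) := by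
  refine ⟨fun m h1 h2 => usym k m h1 h2 hk, fun m _ h => dec_step k m h,
    fun m h1 h2 => inc_step k m h1 h2, ?_⟩
  intro p q hp1 hp2 hq1 hq2 hu
  have hup : useq k p = useq k (min p (k-p)) := by
    rcases le_total p (k-p) with h | h
    · rw [min_eq_left h]
    · rw [min_eq_right h]; exact usym k p hp1 hp2 hk
  have huq : useq k q = useq k (min q (k-q)) := by
    rcases le_total q (k-q) with h | h
    · rw [min_eq_left h]
    · rw [min_eq_right h]; exact usym k q hq1 hq2 hk
  have he : useq k (min p (k-p)) = useq k (min q (k-q)) := by rw [← hup, ← huq, hu]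
  have heq : min p (k-p) = min q (k-q) := by
    rcases lt_trichotomy (min p (k-p)) (min q (k-q)) with h | h | h
    · have := chain k _ _ h (by omega)
      omega
    · exact h
    · have := chain k _ _ h (by omega)
      omega
  omega
end

section
/- Let n = 2k−1 with k ≥ 2, and let f be a graph automorphism of H(2k−1, k) fixing the empty set. If |X| = 2p with 1 ≤ p ≤ k−1, then |f(X)| = 2p or |f(X)| = n − 2p + 1. -/
open Finset symmDiff

/-!
The common neighbours of `∅` and a `2p`-set `X` in `H(2k-1, k)` are the `k`-sets meeting `X` in
`p` points; there are `C(2p, p) C(2k-2p-1, k-p) = C(2p, p) C(2(k-p), k-p) / 2` of them, while `∅`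
and a set of odd size have none. An automorphism fixing `∅` preserves this number, so `f X` is a
`2q`-set with `C(2q, q) C(2(k-q), k-q) = C(2p, p) C(2(k-p), k-p)`. For `a + b` fixed,
`C(2a, a) C(2b, b)` strictly decreases as `a` moves towards `(a + b) / 2`, hence `q = p` or
`q = k - p`.
-/

theorem Nat.two_mul_choose_two_mul_sub_one {m : ℕ} (hm : 0 < m) :
    2 * (2 * m - 1).choose m = m.centralBinom := by
  obtain ⟨j, rfl⟩ : ∃ j, m = j + 1 := ⟨m - 1, by omega⟩
  have := Nat.choose_succ_succ (2 * j + 1) j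
  rw [Nat.choose_symm_half] at this
  rw [Nat.centralBinom_eq_two_mul_choose, show 2 * (j + 1) - 1 = 2 * j + 1 by omega,
    show 2 * (j + 1) = 2 * j + 1 + 1 by ring, this, Nat.choose_symm_half]
  ring

theorem Nat.centralBinom_succ_mul_lt {a c : ℕ} (h : a < c) :
    (a + 1).centralBinom * c.centralBinom < a.centralBinom * (c + 1).centralBinom := by
  have ha := Nat.succ_mul_centralBinom_succ a
  have hc := Nat.succ_mul_centralBinom_succ c
  have hpos := Nat.mul_pos (Nat.centralBinom_pos a) (Nat.centralBinom_pos c)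
  have hmul : (2 * a + 1) * (c + 1) < (2 * c + 1) * (a + 1) := by nlinarith
  refine Nat.lt_of_mul_lt_mul_left (a := (a + 1) * (c + 1)) ?_
  calc (a + 1) * (c + 1) * ((a + 1).centralBinom * c.centralBinom)
      = (c + 1) * ((a + 1) * (a + 1).centralBinom) * c.centralBinom := by ring
    _ = 2 * ((2 * a + 1) * (c + 1)) * (a.centralBinom * c.centralBinom) := by rw [ha]; ring
    _ < 2 * ((2 * c + 1) * (a + 1)) * (a.centralBinom * c.centralBinom) := by gcongr
    _ = (a + 1) * ((c + 1) * (c + 1).centralBinom) * a.centralBinom := by rw [hc]; ring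
    _ = (a + 1) * (c + 1) * (a.centralBinom * (c + 1).centralBinom) := by ring

theorem Nat.strictAntiOn_centralBinom_mul_centralBinom_sub (s : ℕ) :
    StrictAntiOn (fun a => a.centralBinom * (s - a).centralBinom) (Set.Iic (s / 2)) :=
  strictAntiOn_Iic_of_succ_lt fun m hm => by
    obtain ⟨c, hc⟩ : ∃ c, s - m = c + 1 := ⟨s - m - 1, by omega⟩
    simpa [Order.succ_eq_add_one, show s - (m + 1) = c by omega, hc] using
      Nat.centralBinom_succ_mul_lt (show m < c by omega)

theorem Nat.eq_or_eq_sub_of_centralBinom_mul_eq {s p q : ℕ} (hp : p ≤ s) (hq : q ≤ s)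
    (h : p.centralBinom * (s - p).centralBinom = q.centralBinom * (s - q).centralBinom) :
    q = p ∨ q = s - p := by
  have hmin : ∀ a ≤ s, a.centralBinom * (s - a).centralBinom =
      (min a (s - a)).centralBinom * (s - min a (s - a)).centralBinom := by
    intro a ha
    rcases le_total a (s - a) with h' | h'
    · rw [min_eq_left h']
    · rw [min_eq_right h', Nat.sub_sub_self ha, mul_comm]
  rw [hmin p hp, hmin q hq] at h
  have := (Nat.strictAntiOn_centralBinom_mul_centralBinom_sub s).injOn
    (show min p (s - p) ≤ s / 2 by omega) (show min q (s - q) ≤ s / 2 by omega) h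
  omega

theorem Finset.card_symmDiff_add_two_mul_card_inter {α : Type*} [DecidableEq α]
    (s t : Finset α) :
    #(s ∆ t) + 2 * #(s ∩ t) = #s + #t := by
  have := card_union_add_card_inter s t
  rw [symmDiff_eq_sup_sdiff_inf, sup_eq_union, inf_eq_inter,
    card_sdiff_of_subset inter_subset_union]
  have := card_le_card (inter_subset_union (s := s) (t := t))
  omega

theorem Finset.card_filter_card_inter_card_sdiff {α : Type*} [Fintype α] [DecidableEq α]
    (X : Finset α) (i j : ℕ) :
    #{A : Finset α | #(A ∩ X) = i ∧ #(A \ X) = j} =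
      (#X).choose i * (Fintype.card α - #X).choose j := by
  have split : ∀ B ⊆ X, ∀ C ⊆ Xᶜ, (B ∪ C) ∩ X = B ∧ (B ∪ C) \ X = C := by
    intro B hB C hC
    simp only [subset_iff, mem_compl] at hB hC
    constructor <;> ext x <;> simp only [mem_union, mem_inter, mem_sdiff] <;> grind
  rw [← card_compl, ← card_powersetCard, ← card_powersetCard, ← card_product]
  refine card_nbij' (fun A => (A ∩ X, A \ X)) (fun B => B.1 ∪ B.2) ?_ ?_ ?_ ?_
  · intro A hA
    simp_all [subset_iff]
  · rintro ⟨B, C⟩ hBC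
    simp only [coe_product, Set.mem_prod, mem_coe, mem_powersetCard] at hBC
    simp [split B hBC.1.1 C hBC.2.1, hBC]
  · intro A _
    simp only [union_comm (A ∩ X), sdiff_union_inter]
  · rintro ⟨B, C⟩ hBC
    simp only [coe_product, Set.mem_prod, mem_coe, mem_powersetCard] at hBC
    simp [split B hBC.1.1 C hBC.2.1]

namespace SimpleGraph.Iso

theorem ncard_commonNeighbors {V W : Type*} {G : SimpleGraph V} {G' : SimpleGraph W}
    (f : G ≃g G') (v w : V) :
    (G'.commonNeighbors (f v) (f w)).ncard = (G.commonNeighbors v w).ncard := by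
  have : G'.commonNeighbors (f v) (f w) = f '' G.commonNeighbors v w := by
    ext x
    obtain ⟨y, rfl⟩ := f.surjective x
    simp [f.injective.mem_set_image, mem_commonNeighbors, f.map_adj_iff]
  rw [this, Set.ncard_image_of_injective _ f.injective]

end SimpleGraph.Iso

namespace HGraph

variable {n k : ℕ}

theorem card_eq_two_mul_of_mem_commonNeighbors_empty {X A : Finset (Fin n)}
    (hA : A ∈ (HGraph n k).commonNeighbors ∅ X) : #X = 2 * #(X ∩ A) := by
  obtain ⟨⟨hA, -⟩, hXA, -⟩ := hA
  rw [← bot_eq_empty, bot_symmDiff] at hA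
  have := card_symmDiff_add_two_mul_card_inter X A
  omega

theorem ncard_commonNeighbors_empty {p : ℕ} (hk : k ≠ 0) (hp : p ≤ k) {X : Finset (Fin n)}
    (hX : #X = 2 * p) :
    ((HGraph n k).commonNeighbors ∅ X).ncard = (2 * p).choose p * (n - 2 * p).choose (k - p) := by
  have : (HGraph n k).commonNeighbors ∅ X =
      ({A | #(A ∩ X) = p ∧ #(A \ X) = k - p} : Finset (Finset (Fin n))) := by
    ext A
    have h₁ := card_symmDiff_add_two_mul_card_inter X A
    have h₂ := card_sdiff_add_card_inter A X
    rw [inter_comm] at h₁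
    simp only [SimpleGraph.mem_commonNeighbors, HGraph, ← bot_eq_empty, bot_symmDiff, coe_filter,
      mem_univ, true_and, Set.mem_ofPred_eq]
    constructor
    · rintro ⟨⟨hA, -⟩, hXA, -⟩
      omega
    · rintro ⟨hAX, hAX'⟩
      have hA : #A = k := by omega
      have hXA : #(X ∆ A) = k := by omega
      refine ⟨⟨hA, fun h => ?_⟩, hXA, fun h => ?_⟩
      · simp only [← h, bot_eq_empty, card_empty] at hA; omega
      · simp only [h, symmDiff_self, bot_eq_empty, card_empty] at hXA; omega
  rw [this, Set.ncard_coe_finset, card_filter_card_inter_card_sdiff, hX, Fintype.card_fin]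

theorem two_mul_ncard_commonNeighbors_empty {p : ℕ} (hn : n = 2 * k - 1) (hp : p < k)
    {X : Finset (Fin n)} (hX : #X = 2 * p) :
    2 * ((HGraph n k).commonNeighbors ∅ X).ncard = p.centralBinom * (k - p).centralBinom := by
  rw [ncard_commonNeighbors_empty (by omega) hp.le hX, show n - 2 * p = 2 * (k - p) - 1 by omega,
    mul_left_comm, Nat.two_mul_choose_two_mul_sub_one (by omega),
    Nat.centralBinom_eq_two_mul_choose p]

end HGraph

theorem stmt_7_general (k n p : ℕ) (hn : n = 2 * k - 1) (hp1 : 1 ≤ p) (hp2 : p ≤ k - 1)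
    (f : HGraph n k ≃g HGraph n k) (hf : f ∅ = ∅)
    (X : Finset (Fin n)) (hX : X.card = 2 * p) :
    (f X).card = 2 * p ∨ (f X).card = n - 2 * p + 1 := by
  have hcount := HGraph.two_mul_ncard_commonNeighbors_empty hn (by omega) hX
  rw [← f.ncard_commonNeighbors, hf] at hcount
  obtain ⟨A, hA⟩ := Set.nonempty_of_ncard_ne_zero (s := (HGraph n k).commonNeighbors ∅ (f X))
    (fun h => by simp [h, Nat.centralBinom_ne_zero] at hcount)
  set q := #(f X ∩ A)
  have hfX : #(f X) = 2 * q := HGraph.card_eq_two_mul_of_mem_commonNeighbors_empty hA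
  have hq1 : q ≠ 0 := by
    intro hq
    rw [hq, mul_zero, card_eq_zero, ← hf, f.apply_eq_iff_eq] at hfX
    rw [hfX, card_empty] at hX
    omega
  have hq2 : q < k := by
    have := card_le_univ (f X)
    rw [Fintype.card_fin] at this
    omega
  rw [HGraph.two_mul_ncard_commonNeighbors_empty hn hq2 hfX] at hcount
  rcases Nat.eq_or_eq_sub_of_centralBinom_mul_eq (by omega) (by omega) hcount.symm with h | h <;>
    omega

/-- For `n = 2k - 1`, `k ≥ 2`: if `f` is an automorphism of `H(2k-1,k)` fixing `∅` and
`|X| = 2p` with `1 ≤ p ≤ k - 1`, then `|f(X)| = 2p` or `|f(X)| = n - 2p + 1`. -/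
theorem stmt_7 (k n p : ℕ) (hk : 2 ≤ k) (hn : n = 2 * k - 1) (hp1 : 1 ≤ p) (hp2 : p ≤ k - 1)
    (f : HGraph n k ≃g HGraph n k) (hf : f ∅ = ∅)
    (X : Finset (Fin n)) (hX : X.card = 2 * p) :
    (f X).card = 2 * p ∨ (f X).card = n - 2 * p + 1 :=
  stmt_7_general k n p hn hp1 hp2 f hf X hX
end

section
/- Let n = 2k+1 with k ≥ 1. The finite sequence u_m = C(2m, m) · C(2k−2m+1, k−m), for 1 ≤ m ≤ k, satisfies u_m = u_{k−m+1} for all m, is strictly decreasing for 1 ≤ m < k/2, and is strictly increasing for k/2 < m ≤ k. -/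
/-- `u_m = C(2m, m) · C(2k - 2m + 1, k - m)`. -/
def vseq (k m : ℕ) : ℕ := Nat.choose (2 * m) m * Nat.choose (2 * k - 2 * m + 1) (k - m)

lemma two_vseq (k m : ℕ) (h : m ≤ k) :
    2 * vseq k m = Nat.centralBinom m * Nat.centralBinom (k - m + 1) := by
  obtain ⟨j, hj⟩ : ∃ j, k - m = j := ⟨k - m, rfl⟩
  have h2 : 2 * k - 2 * m = 2 * j := by omega
  have hdouble : Nat.choose (2 * j + 2) (j + 1) = 2 * Nat.choose (2 * j + 1) j := by
    rw [show 2 * j + 2 = (2 * j + 1) + 1 from rfl, Nat.choose_succ_succ,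
      Nat.choose_symm_half]
    omega
  unfold vseq Nat.centralBinom
  rw [hj, h2]
  have : 2 * (j + 1) = 2 * j + 2 := by ring
  rw [this, hdouble]
  ring

lemma vseq_pos (k m : ℕ) (h : m ≤ k) : 0 < vseq k m := by
  unfold vseq
  exact Nat.mul_pos (Nat.choose_pos (by omega)) (Nat.choose_pos (by omega))

lemma key_s11 (k m : ℕ) (h : m + 1 ≤ k) :
    (m + 1) * (2 * (k - m) + 1) * vseq k (m + 1) =
      (2 * m + 1) * (k - m + 1) * vseq k m := by
  obtain ⟨j, hj⟩ : ∃ j, k - (m + 1) = j := ⟨_, rfl⟩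
  have hkm : k - m = j + 1 := by omega
  have e1 : 2 * vseq k (m + 1) = Nat.centralBinom (m + 1) * Nat.centralBinom (j + 1) := by
    rw [two_vseq k (m + 1) h, hj]
  have e2 : 2 * vseq k m = Nat.centralBinom m * Nat.centralBinom (j + 2) := by
    rw [two_vseq k m (by omega), hkm]
  have h1 := Nat.succ_mul_centralBinom_succ m
  have h2 := Nat.succ_mul_centralBinom_succ (j + 1)
  have main : 2 * ((m + 1) * (2 * (j + 1) + 1) * vseq k (m + 1)) =
      2 * ((2 * m + 1) * (j + 2) * vseq k m) := by
    calc 2 * ((m + 1) * (2 * (j + 1) + 1) * vseq k (m + 1))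
        = (2 * (j + 1) + 1) * (2 * vseq k (m + 1)) * (m + 1) := by ring
      _ = (2 * (j + 1) + 1) * (Nat.centralBinom (m + 1) * Nat.centralBinom (j + 1)) * (m + 1)
          := by rw [e1]
      _ = (2 * (j + 1) + 1) * Nat.centralBinom (j + 1) * ((m + 1) * Nat.centralBinom (m + 1))
          := by ring
      _ = (2 * (j + 1) + 1) * Nat.centralBinom (j + 1) * (2 * (2 * m + 1) * Nat.centralBinom m)
          := by rw [h1]
      _ = (2 * m + 1) * Nat.centralBinom m * ((j + 1 + 1) * Nat.centralBinom (j + 1 + 1))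
          := by rw [h2]; ring
      _ = (2 * m + 1) * (j + 2) * (Nat.centralBinom m * Nat.centralBinom (j + 2)) := by ring
      _ = (2 * m + 1) * (j + 2) * (2 * vseq k m) := by rw [e2]
      _ = 2 * ((2 * m + 1) * (j + 2) * vseq k m) := by ring
  rw [show k - m + 1 = j + 2 by omega, hkm]
  omega

/-- For `n = 2k + 1`, `k ≥ 1`, the sequence `u_m` (for `1 ≤ m ≤ k`) satisfies
`u_m = u_{k-m+1}`, is strictly decreasing for `1 ≤ m < k/2`, and strictly increasing
for `k/2 < m ≤ k`. -/
theorem stmt_11 (k : ℕ) (hk : 1 ≤ k) :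
    (∀ m, 1 ≤ m → m ≤ k → vseq k m = vseq k (k - m + 1)) ∧
    (∀ m, 1 ≤ m → 2 * m < k → vseq k (m + 1) < vseq k m) ∧
    (∀ m, k < 2 * m → m + 1 ≤ k → vseq k m < vseq k (m + 1)) := by
  refine ⟨?_, ?_, ?_⟩
  · intro m hm1 hmk
    have e1 := two_vseq k m hmk
    have e2 := two_vseq k (k - m + 1) (by omega)
    have hm : k - (k - m + 1) + 1 = m := by omega
    rw [hm] at e2
    have : 2 * vseq k m = 2 * vseq k (k - m + 1) := by rw [e1, e2]; ring
    omega
  · intro m hm1 hmk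
    have hkey := key_s11 k m (by omega)
    have hpos := vseq_pos k m (by omega)
    obtain ⟨d, hd⟩ : ∃ d, k - m = d := ⟨_, rfl⟩
    have hmd : m < d := by omega
    rw [hd] at hkey
    have hAB : (2 * m + 1) * (d + 1) < (m + 1) * (2 * d + 1) := by nlinarith
    have : (m + 1) * (2 * d + 1) * vseq k (m + 1) < (m + 1) * (2 * d + 1) * vseq k m := by
      rw [hkey]
      exact Nat.mul_lt_mul_of_lt_of_le hAB (le_refl _) hpos
    exact Nat.lt_of_mul_lt_mul_left this
  · intro m hmk hm1
    have hkey := key_s11 k m hm1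
    have hpos := vseq_pos k (m + 1) hm1
    obtain ⟨d, hd⟩ : ∃ d, k - m = d := ⟨_, rfl⟩
    have hmd : d < m := by omega
    rw [hd] at hkey
    have hAB : (m + 1) * (2 * d + 1) < (2 * m + 1) * (d + 1) := by nlinarith
    have : (2 * m + 1) * (d + 1) * vseq k m < (2 * m + 1) * (d + 1) * vseq k (m + 1) := by
      rw [← hkey]
      exact Nat.mul_lt_mul_of_lt_of_le hAB (le_refl _) hpos
    exact Nat.lt_of_mul_lt_mul_left this
end

section
/- For k odd, k ≥ 3, and n ≥ 2k+2, the sequence u_p = C(2p, p) · C(n−2p, k−p) is strictly decreasing for p = 1, 2, ..., (k−3)/2; i.e., u_p > u_{p+1} for 1 ≤ p < (k−3)/2. Equivalently, (p+1)(n−2p)(n−2p−1) > 2(2p+1)(k−p)(n−k−p) for these p. -/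
lemma lemA (p : ℕ) : (p+1) * Nat.choose (2*p+2) (p+1) = 2*(2*p+1) * Nat.choose (2*p) p := by
  have h1 : Nat.choose (2*p+2) (p+1) = Nat.choose (2*p+1) p + Nat.choose (2*p+1) (p+1) :=
    Nat.choose_succ_succ _ _
  have h2 : Nat.choose (2*p+1) p = Nat.choose (2*p+1) (p+1) := by
    rw [← Nat.choose_symm (by omega : p+1 ≤ 2*p+1)]
    congr 1; omega
  have h3 : (2*p+1) * Nat.choose (2*p) p = Nat.choose (2*p+1) (p+1) * (p+1) :=
    Nat.add_one_mul_choose_eq (2*p) p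
  rw [h1, h2]
  nlinarith [h3]

lemma lemB (M J : ℕ) :
    (J+1)*((M+1)-J)*Nat.choose (M+2) (J+1) = (M+2)*(M+1)*Nat.choose M J := by
  have h1 : (M+2) * Nat.choose (M+1) J = Nat.choose (M+2) (J+1) * (J+1) :=
    Nat.add_one_mul_choose_eq (M+1) J
  have h2 : Nat.choose M J * (M+1) = Nat.choose (M+1) J * (M+1-J) :=
    Nat.choose_mul_succ_eq M J
  calc (J+1)*((M+1)-J)*Nat.choose (M+2) (J+1)
      = ((M+1)-J) * (Nat.choose (M+2) (J+1) * (J+1)) := by ring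
    _ = ((M+1)-J) * ((M+2) * Nat.choose (M+1) J) := by rw [h1]
    _ = (M+2) * (Nat.choose (M+1) J * ((M+1)-J)) := by ring
    _ = (M+2) * (Nat.choose M J * (M+1)) := by rw [← h2]
    _ = (M+2)*(M+1)*Nat.choose M J := by ring


lemma lemC (p a b : ℕ) :
    2*(2*p+1)*(p+5+2*a)*(p+7+2*a+b) < (p+1)*(2*p+12+4*a+b)*(2*p+11+4*a+b) := by
  have hE : (p+1)*(2*p+12+4*a+b)*(2*p+11+4*a+b)
      = 2*(2*p+1)*(p+5+2*a)*(p+7+2*a+b) +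
        (62 + 13*b + b^2 + 44*a + 4*a*b + 8*a^2 + 14*p + 5*p*b + p*b^2 + 4*p*a) := by ring
  rw [hE]
  exact Nat.lt_add_of_pos_right (by positivity)

/-- For `k` odd, `k ≥ 3`, `n ≥ 2k + 2`, the sequence `u_p = C(2p,p)·C(n-2p, k-p)` is
strictly decreasing for `1 ≤ p < (k-3)/2`: `u_{p+1} < u_p`, equivalently
`2(2p+1)(k-p)(n-k-p) < (p+1)(n-2p)(n-2p-1)`. -/
theorem stmt_16 (n k p : ℕ) (hk : Odd k) (hk3 : 3 ≤ k) (hn : 2 * k + 2 ≤ n)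
    (hp1 : 1 ≤ p) (hp2 : 2 * p < k - 3) :
    Nat.choose (2 * (p + 1)) (p + 1) * Nat.choose (n - 2 * (p + 1)) (k - (p + 1)) <
      Nat.choose (2 * p) p * Nat.choose (n - 2 * p) (k - p) ∧
    2 * (2 * p + 1) * (k - p) * (n - k - p) < (p + 1) * (n - 2 * p) * (n - 2 * p - 1) := by
  obtain ⟨t, ht⟩ := hk
  -- k = 2p+5+2a, n = 2k+2+b
  obtain ⟨a, ha⟩ : ∃ a, k = 2*p+5+2*a := ⟨t - p - 2, by omega⟩
  obtain ⟨b, hb⟩ : ∃ b, n = 2*k+2+b := ⟨n - (2*k+2), by omega⟩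
  set M : ℕ := 2*p+10+4*a+b with hM
  set J : ℕ := p+4+2*a with hJ
  clear_value M J
  have e1 : n - 2*p = M + 2 := by omega
  have e2 : k - p = J + 1 := by omega
  have e3 : n - 2*(p+1) = M := by omega
  have e4 : k - (p+1) = J := by omega
  have e5 : n - k - p = p+7+2*a+b := by omega
  have e6 : n - 2*p - 1 = M + 1 := by omega
  have e7 : (M+1) - J = p+7+2*a+b := by omega
  have ineq2 : 2 * (2 * p + 1) * (k - p) * (n - k - p) <
      (p + 1) * (n - 2 * p) * (n - 2 * p - 1) := by
    rw [e6, e1, e2, e5, hM, hJ]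
    have eL : 2*(2*p+1)*((p+4+2*a)+1)*(p+7+2*a+b)
        = 2*(2*p+1)*(p+5+2*a)*(p+7+2*a+b) := by ring
    have eR : (p+1)*((2*p+10+4*a+b)+2)*((2*p+10+4*a+b)+1)
        = (p+1)*(2*p+12+4*a+b)*(2*p+11+4*a+b) := by ring
    rw [eL, eR]
    exact lemC p a b
  refine ⟨?_, ineq2⟩
  rw [e3, e4, e1, e2]
  have key : ((p+1)*((M+2)*(M+1))) * (Nat.choose (2*(p+1)) (p+1) * Nat.choose M J)
      = (2*(2*p+1)*((J+1)*(p+7+2*a+b))) *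
        (Nat.choose (2*p) p * Nat.choose (M+2) (J+1)) := by
    have hA := lemA p
    have hB := lemB M J
    rw [e7] at hB
    calc ((p+1)*((M+2)*(M+1))) * (Nat.choose (2*(p+1)) (p+1) * Nat.choose M J)
        = ((p+1) * Nat.choose (2*p+2) (p+1)) * ((M+2)*(M+1)*Nat.choose M J) := by
          rw [show 2*(p+1) = 2*p+2 from by ring]; ring
      _ = (2*(2*p+1) * Nat.choose (2*p) p) *
          ((J+1)*(p+7+2*a+b)*Nat.choose (M+2) (J+1)) := by rw [hA, hB]
      _ = (2*(2*p+1)*((J+1)*(p+7+2*a+b))) *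
          (Nat.choose (2*p) p * Nat.choose (M+2) (J+1)) := by ring
  have hpos : 0 < Nat.choose (2*p) p * Nat.choose (M+2) (J+1) :=
    Nat.mul_pos (Nat.choose_pos (by omega)) (Nat.choose_pos (by omega))
  have hscal : 2*(2*p+1)*((J+1)*(p+7+2*a+b)) < (p+1)*((M+2)*(M+1)) := by
    rw [hM, hJ]
    have eL : 2*(2*p+1)*(((p+4+2*a)+1)*(p+7+2*a+b))
        = 2*(2*p+1)*(p+5+2*a)*(p+7+2*a+b) := by ring
    have eR : (p+1)*(((2*p+10+4*a+b)+2)*((2*p+10+4*a+b)+1))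
        = (p+1)*(2*p+12+4*a+b)*(2*p+11+4*a+b) := by ring
    rw [eL, eR]
    exact lemC p a b
  have hlt : ((p+1)*((M+2)*(M+1))) * (Nat.choose (2*(p+1)) (p+1) * Nat.choose M J)
      < ((p+1)*((M+2)*(M+1))) * (Nat.choose (2*p) p * Nat.choose (M+2) (J+1)) := by
    rw [key]
    exact Nat.mul_lt_mul_of_lt_of_le hscal (le_refl _) hpos
  exact Nat.lt_of_mul_lt_mul_left hlt
end
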